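/- arXiv:1605.00825 — 2 statements merged into one kernel-verified Lean document; each statement's English description precedes it below -/
import Mathlib

section
/- Refining a mesh enlarges level domains: if Q ∈ M_THB, M ⊆ Q, and Q' = (Q \ M) ∪ subdiv(M), then for every k ∈ ℕ the level-k domain of Q is contained in the level-k domain of Q', i.e. Ω^k_Q ⊆ Ω^k_{Q'}. -/
/-- The closed rectangle `[x1,x2] × [y1,y2]` in the plane. -/
def rect (x1 x2 y1 y2 : ℝ) : Set (ℝ × ℝ) := Set.Icc x1 x2 ×ˢ Set.Icc y1 y2

/-- The uniform dyadic mesh of level `k` on `[0,M] × [0,N]`. -/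
def unifMesh (M N k : ℕ) : Set (Set (ℝ × ℝ)) :=
  {S | ∃ m n : ℕ, 1 ≤ m ∧ m ≤ 2 ^ k * M ∧ 1 ≤ n ∧ n ≤ 2 ^ k * N ∧
    S = rect (((m : ℝ) - 1) / 2 ^ k) ((m : ℝ) / 2 ^ k)
             (((n : ℝ) - 1) / 2 ^ k) ((n : ℝ) / 2 ^ k)}

/-- The class of hierarchical dyadic meshes on `[0,M] × [0,N]`: finite collections of
dyadic square elements with pairwise disjoint interiors covering the whole domain. -/
def MTHB (M N : ℕ) (Q : Set (Set (ℝ × ℝ))) : Prop :=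
  Q.Finite ∧ (∀ T ∈ Q, ∃ k, T ∈ unifMesh M N k) ∧
  ⋃₀ Q = Set.Icc (0 : ℝ) M ×ˢ Set.Icc (0 : ℝ) N ∧
  Q.Pairwise (fun A B => interior A ∩ interior B = ∅)

/-- The subdivision of a dyadic element of level `k`: the level-`(k+1)` dyadic squares
contained in it. -/
def subdiv (M N : ℕ) (T : Set (ℝ × ℝ)) : Set (Set (ℝ × ℝ)) :=
  {T' | ∃ k, T ∈ unifMesh M N k ∧ T' ∈ unifMesh M N (k + 1) ∧ T' ⊆ T}

/-- The elementary THB refinement: replace each marked element by its subdivision. -/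
def refineTHB (M N : ℕ) (Q Mk : Set (Set (ℝ × ℝ))) : Set (Set (ℝ × ℝ)) :=
  (Q \ Mk) ∪ ⋃ T ∈ Mk, subdiv M N T

/-- The level-`k` domain of a hierarchical mesh: the union of all elements of level at
least `k`. -/
def levelDomain (M N : ℕ) (Q : Set (Set (ℝ × ℝ))) (k : ℕ) : Set (ℝ × ℝ) :=
  ⋃₀ {T ∈ Q | ∃ j, k ≤ j ∧ T ∈ unifMesh M N j}

lemma dyadic_child (M j m : ℕ) (hm1 : 1 ≤ m) (hm2 : m ≤ 2 ^ j * M) (a : ℝ)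
    (hlo : ((m : ℝ) - 1) / 2 ^ j ≤ a) (hhi : a ≤ (m : ℝ) / 2 ^ j) :
    ∃ m' : ℕ, 1 ≤ m' ∧ m' ≤ 2 ^ (j + 1) * M ∧
      ((m : ℝ) - 1) / 2 ^ j ≤ ((m' : ℝ) - 1) / 2 ^ (j + 1) ∧
      (m' : ℝ) / 2 ^ (j + 1) ≤ (m : ℝ) / 2 ^ j ∧
      ((m' : ℝ) - 1) / 2 ^ (j + 1) ≤ a ∧ a ≤ (m' : ℝ) / 2 ^ (j + 1) := by
  have hm1' : (1 : ℝ) ≤ (m : ℝ) := by exact_mod_cast hm1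
  have hc1 : (0 : ℝ) < 2 ^ (j + 1) := by positivity
  have hbnd : 2 * m ≤ 2 ^ (j + 1) * M :=
    calc 2 * m ≤ 2 * (2 ^ j * M) := Nat.mul_le_mul_left 2 hm2
      _ = 2 ^ (j + 1) * M := by ring
  have key : ((m : ℝ) - 1) / 2 ^ j = (2 * (m : ℝ) - 2) / 2 ^ (j + 1) := by
    rw [pow_succ]; field_simp
  have key2 : (m : ℝ) / 2 ^ j = (2 * (m : ℝ)) / 2 ^ (j + 1) := by
    rw [pow_succ]; field_simp
  by_cases h : a ≤ (2 * (m : ℝ) - 1) / 2 ^ (j + 1)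
  · have hc : ((2 * m - 1 : ℕ) : ℝ) = 2 * (m : ℝ) - 1 := by
      push_cast [Nat.cast_sub (by omega : 1 ≤ 2 * m)]; ring
    refine ⟨2 * m - 1, by omega, by omega, ?_, ?_, ?_, ?_⟩
    · rw [hc, key]; gcongr ?_ / _; · linarith
    · rw [hc, key2]; gcongr ?_ / _; · linarith
    · have e : (2 * (m : ℝ) - 1 - 1) / 2 ^ (j + 1) = ((m : ℝ) - 1) / 2 ^ j := by
        rw [key]; ring_nf
      rw [hc, e]; exact hlo
    · rw [hc]; exact h
  · push_neg at h
    refine ⟨2 * m, by omega, hbnd, ?_, ?_, ?_, ?_⟩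
    · push_cast; rw [key]; gcongr ?_ / _; · linarith
    · push_cast; rw [key2]
    · push_cast; linarith
    · push_cast; rw [← key2]; exact hhi


/-- Refining a hierarchical mesh enlarges all level domains. -/
theorem stmt6 (M N : ℕ) (hM : 1 ≤ M) (hN : 1 ≤ N) (Q Mk : Set (Set (ℝ × ℝ)))
    (hQ : MTHB M N Q) (hMk : Mk ⊆ Q) :
    ∀ k : ℕ, levelDomain M N Q k ⊆ levelDomain M N (refineTHB M N Q Mk) k := by
  intro k x hx
  obtain ⟨T, ⟨hTQ, j, hkj, hTj⟩, hxT⟩ := hx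
  by_cases hTM : T ∈ Mk
  · obtain ⟨m, n, hm1, hm2, hn1, hn2, hT⟩ := hTj
    subst hT
    obtain ⟨hx1, hx2⟩ := hxT
    obtain ⟨m', hm'1, hm'2, hml, hmr, hal, har⟩ :=
      dyadic_child M j m hm1 hm2 x.1 hx1.1 hx1.2
    obtain ⟨n', hn'1, hn'2, hnl, hnr, hbl, hbr⟩ :=
      dyadic_child N j n hn1 hn2 x.2 hx2.1 hx2.2
    set T' := rect (((m' : ℝ) - 1) / 2 ^ (j + 1)) ((m' : ℝ) / 2 ^ (j + 1))
        (((n' : ℝ) - 1) / 2 ^ (j + 1)) ((n' : ℝ) / 2 ^ (j + 1)) with hT'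
    have hT'mesh : T' ∈ unifMesh M N (j + 1) := ⟨m', n', hm'1, hm'2, hn'1, hn'2, rfl⟩
    have hsub : T' ⊆ rect (((m : ℝ) - 1) / 2 ^ j) ((m : ℝ) / 2 ^ j)
        (((n : ℝ) - 1) / 2 ^ j) ((n : ℝ) / 2 ^ j) :=
      Set.prod_mono (Set.Icc_subset_Icc hml hmr) (Set.Icc_subset_Icc hnl hnr)
    have hTmesh : rect (((m : ℝ) - 1) / 2 ^ j) ((m : ℝ) / 2 ^ j)
        (((n : ℝ) - 1) / 2 ^ j) ((n : ℝ) / 2 ^ j) ∈ unifMesh M N j :=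
      ⟨m, n, hm1, hm2, hn1, hn2, rfl⟩
    refine ⟨T', ⟨Or.inr ?_, j + 1, by omega, hT'mesh⟩, ⟨⟨hal, har⟩, ⟨hbl, hbr⟩⟩⟩
    exact Set.mem_biUnion hTM ⟨j, hTmesh, hT'mesh, hsub⟩
  · exact ⟨T, ⟨Or.inl ⟨hTQ, hTM⟩, j, hkj, hTj⟩, hxT⟩
end

section
/- For any T-junction v of a T-mesh Q ∈ M_tsp, there is a unique single-element bisection removing it: there exist unique j ∈ {1,2} and 0 < q < 1 such that v is a corner of both children in bisect_{j,q}(Q_v), where Q_v is the unique element with v ∈ T(Q_v); consequently v is not a T-junction of the refined mesh (Q \ {Q_v}) ∪ bisect_{j,q}(Q_v). -/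
/-- Bisection of the rectangle `[x,x+a] × [y,y+b]` at relative position `q` in the
`x`-direction (`j = 1`) or `y`-direction (`j = 2`). -/
def bisect (x y a b : ℝ) (j : ℕ) (q : ℝ) : Set (Set (ℝ × ℝ)) :=
  if j = 1 then
    {rect x (x + q * a) y (y + b), rect (x + q * a) (x + a) y (y + b)}
  else
    {rect x (x + a) y (y + q * b), rect x (x + a) (y + q * b) (y + b)}

/-- The T-spline mesh class: generated from the unit tensor-product mesh on
`[0,M] × [0,N]` by successive single-element bisections. -/
inductive MTsp (M N : ℕ) : Set (Set (ℝ × ℝ)) → Prop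
  | base : MTsp M N (unifMesh M N 0)
  | step (Q : Set (Set (ℝ × ℝ))) (x y a b q : ℝ) (j : ℕ) :
      MTsp M N Q → rect x (x + a) y (y + b) ∈ Q → 0 < a → 0 < b →
      (j = 1 ∨ j = 2) → 0 < q → q < 1 →
      MTsp M N ((Q \ {rect x (x + a) y (y + b)}) ∪ bisect x y a b j q)

/-- The set of corners (vertices) of a closed rectangle. -/
def corners (S : Set (ℝ × ℝ)) : Set (ℝ × ℝ) :=
  {p | ∃ x1 x2 y1 y2 : ℝ, x1 < x2 ∧ y1 < y2 ∧ S = rect x1 x2 y1 y2 ∧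
    (p.1 = x1 ∨ p.1 = x2) ∧ (p.2 = y1 ∨ p.2 = y2)}

/-- The set of all vertices of a mesh. -/
def meshVertices (Q : Set (Set (ℝ × ℝ))) : Set (ℝ × ℝ) :=
  ⋃ T ∈ Q, corners T

/-- The T-junctions of an element `T` in the mesh `Q`: mesh vertices lying in `T`
without being corners of `T`. -/
def TJ (Q : Set (Set (ℝ × ℝ))) (T : Set (ℝ × ℝ)) : Set (ℝ × ℝ) :=
  (meshVertices Q ∩ T) \ corners T

lemma mem_rect {a b c d : ℝ} {p : ℝ × ℝ} :
    p ∈ rect a b c d ↔ (a ≤ p.1 ∧ p.1 ≤ b) ∧ (c ≤ p.2 ∧ p.2 ≤ d) := Iff.rfl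

lemma rect_inj {a b c d a' b' c' d' : ℝ} (hab : a < b) (hcd : c < d)
    (h : rect a b c d = rect a' b' c' d') (hab' : a' < b') (hcd' : c' < d') :
    a = a' ∧ b = b' ∧ c = c' ∧ d = d' := by
  have h1 : (a, c) ∈ rect a' b' c' d' := h ▸ mem_rect.mpr ⟨⟨le_rfl, hab.le⟩, le_rfl, hcd.le⟩
  have h2 : (b, d) ∈ rect a' b' c' d' := h ▸ mem_rect.mpr ⟨⟨hab.le, le_rfl⟩, hcd.le, le_rfl⟩
  have h3 : (a', c') ∈ rect a b c d := h.symm ▸ mem_rect.mpr ⟨⟨le_rfl, hab'.le⟩, le_rfl, hcd'.le⟩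
  have h4 : (b', d') ∈ rect a b c d := h.symm ▸ mem_rect.mpr ⟨⟨hab'.le, le_rfl⟩, hcd'.le, le_rfl⟩
  rw [mem_rect] at h1 h2 h3 h4
  simp only [Prod.fst, Prod.snd] at h1 h2 h3 h4
  exact ⟨le_antisymm h3.1.1 h1.1.1, le_antisymm h2.1.2 h4.1.2,
    le_antisymm h3.2.1 h1.2.1, le_antisymm h2.2.2 h4.2.2⟩

def oint (a b c d : ℝ) : Set (ℝ × ℝ) := Set.Ioo a b ×ˢ Set.Ioo c d

lemma mem_oint {a b c d : ℝ} {p : ℝ × ℝ} :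
    p ∈ oint a b c d ↔ (a < p.1 ∧ p.1 < b) ∧ (c < p.2 ∧ p.2 < d) := Iff.rfl

/-- The mesh invariant: every element is a nondegenerate rectangle, and distinct
elements have disjoint open interiors. -/

def GoodMesh (Q : Set (Set (ℝ × ℝ))) : Prop :=
  (∀ S ∈ Q, ∃ a b c d : ℝ, a < b ∧ c < d ∧ S = rect a b c d) ∧
  (∀ S₁ ∈ Q, ∀ S₂ ∈ Q, ∀ a b c d a' b' c' d' : ℝ,
    a < b → c < d → a' < b' → c' < d' →
    S₁ = rect a b c d → S₂ = rect a' b' c' d' → S₁ ≠ S₂ →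
    oint a b c d ∩ oint a' b' c' d' = ∅)

lemma unifMesh_zero_good (M N : ℕ) : GoodMesh (unifMesh M N 0) := by
  constructor
  · rintro S ⟨m, n, -, -, -, -, rfl⟩
    exact ⟨_, _, _, _, by rw [pow_zero, div_one, div_one]; linarith,
      by rw [pow_zero, div_one, div_one]; linarith, rfl⟩
  · rintro S₁ ⟨m, n, -, -, -, -, rfl⟩ S₂ ⟨m', n', -, -, -, -, rfl⟩ a b c d a' b' c' d'
      hab hcd hab' hcd' hr1 hr2 hne
    simp only [pow_zero, div_one] at hr1 hr2 hne ⊢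
    obtain ⟨ea, eb, ec, ed⟩ := rect_inj (by linarith) (by linarith) hr1 hab hcd
    obtain ⟨ea', eb', ec', ed'⟩ := rect_inj (by linarith) (by linarith) hr2 hab' hcd'
    subst ea; subst eb; subst ec; subst ed
    subst ea'; subst eb'; subst ec'; subst ed'
    have hmn : (m : ℝ) ≠ m' ∨ (n : ℝ) ≠ n' := by
      by_contra h
      push_neg at h
      exact hne (by rw [h.1, h.2])
    rw [Set.eq_empty_iff_forall_notMem]
    intro p hp
    obtain ⟨⟨u1, u2⟩, u3, u4⟩ := mem_oint.mp hp.1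
    obtain ⟨⟨w1, w2⟩, w3, w4⟩ := mem_oint.mp hp.2
    rcases hmn with h | h
    · have h' : m ≠ m' := fun hh => h (by rw [hh])
      rcases Nat.lt_or_ge m m' with hlt | hge
      · have hc1 : m + 1 ≤ m' := hlt
        have : (m : ℝ) + 1 ≤ m' := by exact_mod_cast hc1
        linarith
      · have hlt : m' < m := lt_of_le_of_ne hge (Ne.symm h')
        have hc1 : m' + 1 ≤ m := hlt
        have : (m' : ℝ) + 1 ≤ m := by exact_mod_cast hc1
        linarith
    · have h' : n ≠ n' := fun hh => h (by rw [hh])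
      rcases Nat.lt_or_ge n n' with hlt | hge
      · have hc1 : n + 1 ≤ n' := hlt
        have : (n : ℝ) + 1 ≤ n' := by exact_mod_cast hc1
        linarith
      · have hlt : n' < n := lt_of_le_of_ne hge (Ne.symm h')
        have hc1 : n' + 1 ≤ n := hlt
        have : (n' : ℝ) + 1 ≤ n := by exact_mod_cast hc1
        linarith

lemma goodmesh_step {Q : Set (Set (ℝ × ℝ))} (hG : GoodMesh Q)
    {R : Set (ℝ × ℝ)} (hR : R ∈ Q)
    {u1 u2 u3 u4 : ℝ} (h12 : u1 < u2) (h34 : u3 < u4) (hRr : R = rect u1 u2 u3 u4)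
    {e1 e2 e3 e4 f1 f2 f3 f4 : ℝ} (he12 : e1 < e2) (he34 : e3 < e4)
    (hf12 : f1 < f2) (hf34 : f3 < f4)
    (hsub1 : oint e1 e2 e3 e4 ⊆ oint u1 u2 u3 u4)
    (hsub2 : oint f1 f2 f3 f4 ⊆ oint u1 u2 u3 u4)
    (hdisj : oint e1 e2 e3 e4 ∩ oint f1 f2 f3 f4 = ∅) :
    GoodMesh ((Q \ {R}) ∪ {rect e1 e2 e3 e4, rect f1 f2 f3 f4}) := by
  constructor
  · intro S hS
    simp only [Set.mem_union, Set.mem_diff, Set.mem_insert_iff, Set.mem_singleton_iff] at hS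
    rcases hS with ⟨hSQ, -⟩ | rfl | rfl
    · exact hG.1 S hSQ
    · exact ⟨e1, e2, e3, e4, he12, he34, rfl⟩
    · exact ⟨f1, f2, f3, f4, hf12, hf34, rfl⟩
  · intro S₁ hS₁ S₂ hS₂ a b c d a' b' c' d' hab hcd hab' hcd' hr1 hr2 hne
    simp only [Set.mem_union, Set.mem_diff, Set.mem_insert_iff, Set.mem_singleton_iff]
      at hS₁ hS₂
    have main : ∀ g1 g2 g3 g4 : ℝ, oint g1 g2 g3 g4 ⊆ oint u1 u2 u3 u4 →
        ∀ S ∈ Q, S ≠ R → ∀ p1 p2 p3 p4 : ℝ, p1 < p2 → p3 < p4 → S = rect p1 p2 p3 p4 →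
        oint p1 p2 p3 p4 ∩ oint g1 g2 g3 g4 = ∅ := by
      intro g1 g2 g3 g4 hsub S hS hSne p1 p2 p3 p4 hp hp' hrep
      rw [Set.eq_empty_iff_forall_notMem]
      intro p hp0
      have h0 := hG.2 S hS R hR p1 p2 p3 p4 u1 u2 u3 u4 hp hp' h12 h34 hrep hRr hSne
      rw [Set.eq_empty_iff_forall_notMem] at h0
      exact h0 p ⟨hp0.1, hsub hp0.2⟩
    rcases hS₁ with ⟨h1Q, h1ne⟩ | h1 | h1 <;> rcases hS₂ with ⟨h2Q, h2ne⟩ | h2 | h2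
    · exact hG.2 S₁ h1Q S₂ h2Q a b c d a' b' c' d' hab hcd hab' hcd' hr1 hr2 hne
    · obtain ⟨q1, q2, q3, q4⟩ := rect_inj hab' hcd' (hr2.symm.trans h2) he12 he34
      subst q1; subst q2; subst q3; subst q4
      exact main _ _ _ _ hsub1 S₁ h1Q h1ne a b c d hab hcd hr1
    · obtain ⟨q1, q2, q3, q4⟩ := rect_inj hab' hcd' (hr2.symm.trans h2) hf12 hf34
      subst q1; subst q2; subst q3; subst q4
      exact main _ _ _ _ hsub2 S₁ h1Q h1ne a b c d hab hcd hr1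
    · obtain ⟨q1, q2, q3, q4⟩ := rect_inj hab hcd (hr1.symm.trans h1) he12 he34
      subst q1; subst q2; subst q3; subst q4
      rw [Set.inter_comm]
      exact main _ _ _ _ hsub1 S₂ h2Q h2ne a' b' c' d' hab' hcd' hr2
    · exact absurd (h1.trans h2.symm) hne
    · obtain ⟨q1, q2, q3, q4⟩ := rect_inj hab hcd (hr1.symm.trans h1) he12 he34
      obtain ⟨q1', q2', q3', q4'⟩ := rect_inj hab' hcd' (hr2.symm.trans h2) hf12 hf34
      subst q1; subst q2; subst q3; subst q4
      subst q1'; subst q2'; subst q3'; subst q4'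
      exact hdisj
    · obtain ⟨q1, q2, q3, q4⟩ := rect_inj hab hcd (hr1.symm.trans h1) hf12 hf34
      subst q1; subst q2; subst q3; subst q4
      rw [Set.inter_comm]
      exact main _ _ _ _ hsub2 S₂ h2Q h2ne a' b' c' d' hab' hcd' hr2
    · obtain ⟨q1, q2, q3, q4⟩ := rect_inj hab hcd (hr1.symm.trans h1) hf12 hf34
      obtain ⟨q1', q2', q3', q4'⟩ := rect_inj hab' hcd' (hr2.symm.trans h2) he12 he34
      subst q1; subst q2; subst q3; subst q4
      subst q1'; subst q2'; subst q3'; subst q4'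
      rw [Set.inter_comm]
      exact hdisj
    · exact absurd (h1.trans h2.symm) hne

lemma mtsp_good {M N : ℕ} {Q : Set (Set (ℝ × ℝ))} (hQ : MTsp M N Q) : GoodMesh Q := by
  induction hQ with
  | base => exact unifMesh_zero_good M N
  | step Q x y a b q j hQ' hmem ha hb hj hq0 hq1 ih =>
    rcases hj with rfl | rfl
    · have hb1 : bisect x y a b 1 q =
          {rect x (x + q * a) y (y + b), rect (x + q * a) (x + a) y (y + b)} := by
        simp [bisect]
      rw [hb1]
      have hqa : 0 < q * a := mul_pos hq0 ha
      have hqa' : q * a < a := by nlinarith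
      refine goodmesh_step ih hmem (by linarith) (by linarith) rfl (by linarith) (by linarith)
        (by linarith) (by linarith) ?_ ?_ ?_
      · intro p hp
        obtain ⟨⟨p1, p2⟩, p3, p4⟩ := mem_oint.mp hp
        exact mem_oint.mpr ⟨⟨p1, by linarith⟩, p3, p4⟩
      · intro p hp
        obtain ⟨⟨p1, p2⟩, p3, p4⟩ := mem_oint.mp hp
        exact mem_oint.mpr ⟨⟨by linarith, p2⟩, p3, p4⟩
      · rw [Set.eq_empty_iff_forall_notMem]
        intro p hp
        obtain ⟨⟨p1, p2⟩, -⟩ := mem_oint.mp hp.1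
        obtain ⟨⟨p3, -⟩, -⟩ := mem_oint.mp hp.2
        linarith
    · have hb2 : bisect x y a b 2 q =
          {rect x (x + a) y (y + q * b), rect x (x + a) (y + q * b) (y + b)} := by
        norm_num [bisect]
      rw [hb2]
      have hqb : 0 < q * b := mul_pos hq0 hb
      have hqb' : q * b < b := by nlinarith
      refine goodmesh_step ih hmem (by linarith) (by linarith) rfl (by linarith) (by linarith)
        (by linarith) (by linarith) ?_ ?_ ?_
      · intro p hp
        obtain ⟨⟨p1, p2⟩, p3, p4⟩ := mem_oint.mp hp
        exact mem_oint.mpr ⟨⟨p1, p2⟩, p3, by linarith⟩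
      · intro p hp
        obtain ⟨⟨p1, p2⟩, p3, p4⟩ := mem_oint.mp hp
        exact mem_oint.mpr ⟨⟨p1, p2⟩, by linarith, p4⟩
      · rw [Set.eq_empty_iff_forall_notMem]
        intro p hp
        obtain ⟨-, -, p2⟩ := mem_oint.mp hp.1
        obtain ⟨-, p3, -⟩ := mem_oint.mp hp.2
        linarith

lemma mem_corners_rect {a b c d : ℝ} (hab : a < b) (hcd : c < d) {p : ℝ × ℝ} :
    p ∈ corners (rect a b c d) ↔ (p.1 = a ∨ p.1 = b) ∧ (p.2 = c ∨ p.2 = d) := by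
  constructor
  · rintro ⟨u1, u2, u3, u4, h1, h2, heq, hxx, hyy⟩
    obtain ⟨e1, e2, e3, e4⟩ := rect_inj hab hcd heq h1 h2
    rw [← e1, ← e2] at hxx
    rw [← e3, ← e4] at hyy
    exact ⟨hxx, hyy⟩
  · rintro ⟨hxx, hyy⟩
    exact ⟨a, b, c, d, hab, hcd, rfl, hxx, hyy⟩

def VSign (a b w s : ℝ) : Prop := (s = 1 ∧ w < b) ∨ (s = -1 ∧ a < w)

lemma vsign_one {a b w : ℝ} (h : w < b) : VSign a b w 1 := Or.inl ⟨rfl, h⟩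

lemma vsign_neg_one {a b w : ℝ} (h : a < w) : VSign a b w (-1) := Or.inr ⟨rfl, h⟩

lemma vsign_delta {a b w s : ℝ} (h1 : a ≤ w) (h2 : w ≤ b) (hs : VSign a b w s) :
    ∃ δ, 0 < δ ∧ ∀ ε, 0 < ε → ε ≤ δ → w + s * ε ∈ Set.Ioo a b := by
  rcases hs with ⟨rfl, hw⟩ | ⟨rfl, hw⟩
  · exact ⟨(b - w) / 2, by linarith, fun ε hε hεδ => ⟨by linarith, by linarith⟩⟩
  · exact ⟨(w - a) / 2, by linarith, fun ε hε hεδ => ⟨by linarith, by linarith⟩⟩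

lemma overlap {a b c d a' b' c' d' : ℝ} {v : ℝ × ℝ} {s t : ℝ}
    (hv : v ∈ rect a b c d) (hv' : v ∈ rect a' b' c' d')
    (hs : VSign a b v.1 s) (hs' : VSign a' b' v.1 s)
    (ht : VSign c d v.2 t) (ht' : VSign c' d' v.2 t) :
    (oint a b c d ∩ oint a' b' c' d').Nonempty := by
  obtain ⟨⟨ha1, ha2⟩, hc1, hc2⟩ := mem_rect.mp hv
  obtain ⟨⟨ha1', ha2'⟩, hc1', hc2'⟩ := mem_rect.mp hv'
  obtain ⟨δ1, hδ1, H1⟩ := vsign_delta ha1 ha2 hs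
  obtain ⟨δ2, hδ2, H2⟩ := vsign_delta hc1 hc2 ht
  obtain ⟨δ3, hδ3, H3⟩ := vsign_delta ha1' ha2' hs'
  obtain ⟨δ4, hδ4, H4⟩ := vsign_delta hc1' hc2' ht'
  set ε := min (min δ1 δ2) (min δ3 δ4) with hεdef
  have hεpos : 0 < ε := lt_min (lt_min hδ1 hδ2) (lt_min hδ3 hδ4)
  refine ⟨(v.1 + s * ε, v.2 + t * ε), mem_oint.mpr ⟨?_, ?_⟩, mem_oint.mpr ⟨?_, ?_⟩⟩
  · exact H1 ε hεpos (le_trans (min_le_left _ _) (min_le_left _ _))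
  · exact H2 ε hεpos (le_trans (min_le_left _ _) (min_le_right _ _))
  · exact H3 ε hεpos (le_trans (min_le_right _ _) (min_le_left _ _))
  · exact H4 ε hεpos (le_trans (min_le_right _ _) (min_le_right _ _))

lemma eq_of_signs {Q : Set (Set (ℝ × ℝ))} (hG : GoodMesh Q) {S₁ S₂ : Set (ℝ × ℝ)}
    (h1 : S₁ ∈ Q) (h2 : S₂ ∈ Q) {a b c d a' b' c' d' : ℝ} {v : ℝ × ℝ} {s t : ℝ}
    (hab : a < b) (hcd : c < d) (hab' : a' < b') (hcd' : c' < d')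
    (hr1 : S₁ = rect a b c d) (hr2 : S₂ = rect a' b' c' d')
    (hv1 : v ∈ rect a b c d) (hv2 : v ∈ rect a' b' c' d')
    (hs : VSign a b v.1 s) (hs' : VSign a' b' v.1 s)
    (ht : VSign c d v.2 t) (ht' : VSign c' d' v.2 t) : S₁ = S₂ := by
  by_contra hne
  obtain ⟨p, hp⟩ := overlap hv1 hv2 hs hs' ht ht'
  have he := hG.2 S₁ h1 S₂ h2 a b c d a' b' c' d' hab hcd hab' hcd' hr1 hr2 hne
  rw [he] at hp
  exact hp

lemma key_edge {Q : Set (Set (ℝ × ℝ))} (hG : GoodMesh Q) {T0 S : Set (ℝ × ℝ)} {v : ℝ × ℝ}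
    (hT0 : T0 ∈ Q) (hc : v ∈ corners T0) (hS : S ∈ Q)
    {a b c d : ℝ} (hab : a < b) (hcd : c < d) (hrep : S = rect a b c d)
    (hvS : v ∈ rect a b c d) (hnc : v ∉ corners S) :
    (a < v.1 ∧ v.1 < b ∧ (v.2 = c ∨ v.2 = d)) ∨
    ((v.1 = a ∨ v.1 = b) ∧ c < v.2 ∧ v.2 < d) := by
  obtain ⟨⟨hva, hvb⟩, hvc, hvd⟩ := mem_rect.mp hvS
  obtain ⟨α, β, γ, δ, hαβ, hγδ, hT0r⟩ := hG.1 T0 hT0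
  have hc' := (mem_corners_rect hαβ hγδ).mp (hT0r ▸ hc)
  have hvT0 : v ∈ rect α β γ δ := by
    rw [mem_rect]
    constructor
    · rcases hc'.1 with h | h <;> rw [h] <;> exact ⟨by linarith, by linarith⟩
    · rcases hc'.2 with h | h <;> rw [h] <;> exact ⟨by linarith, by linarith⟩
  have hnc' : ¬((v.1 = a ∨ v.1 = b) ∧ (v.2 = c ∨ v.2 = d)) := by
    intro h
    have h2 : v ∈ corners (rect a b c d) := (mem_corners_rect hab hcd).mpr h
    rw [← hrep] at h2
    exact hnc h2
  have hint : ¬(a < v.1 ∧ v.1 < b ∧ c < v.2 ∧ v.2 < d) := by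
    rintro ⟨h1, h2, h3, h4⟩
    have hne : T0 ≠ S := fun h => hnc (h ▸ hc)
    rcases hc'.1 with hv1 | hv1 <;> rcases hc'.2 with hv2 | hv2
    · exact hne (eq_of_signs hG hT0 hS hαβ hγδ hab hcd hT0r hrep hvT0 hvS
        (vsign_one (by linarith)) (vsign_one h2) (vsign_one (by linarith)) (vsign_one h4))
    · exact hne (eq_of_signs hG hT0 hS hαβ hγδ hab hcd hT0r hrep hvT0 hvS
        (vsign_one (by linarith)) (vsign_one h2)
        (vsign_neg_one (by linarith)) (vsign_neg_one h3))
    · exact hne (eq_of_signs hG hT0 hS hαβ hγδ hab hcd hT0r hrep hvT0 hvS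
        (vsign_neg_one (by linarith)) (vsign_neg_one h1)
        (vsign_one (by linarith)) (vsign_one h4))
    · exact hne (eq_of_signs hG hT0 hS hαβ hγδ hab hcd hT0r hrep hvT0 hvS
        (vsign_neg_one (by linarith)) (vsign_neg_one h1)
        (vsign_neg_one (by linarith)) (vsign_neg_one h3))
  by_cases hcase : a < v.1 ∧ v.1 < b
  · refine Or.inl ⟨hcase.1, hcase.2, ?_⟩
    by_contra hcon
    push_neg at hcon
    exact hint ⟨hcase.1, hcase.2, lt_of_le_of_ne hvc (Ne.symm hcon.1),
      lt_of_le_of_ne hvd hcon.2⟩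
  · have hx' : v.1 = a ∨ v.1 = b := by
      rcases eq_or_lt_of_le hva with h | h
      · exact Or.inl h.symm
      rcases eq_or_lt_of_le hvb with h' | h'
      · exact Or.inr h'
      · exact absurd ⟨h, h'⟩ hcase
    have hy' : ¬(v.2 = c ∨ v.2 = d) := fun h => hnc' ⟨hx', h⟩
    push_neg at hy'
    exact Or.inr ⟨hx', lt_of_le_of_ne hvc (Ne.symm hy'.1), lt_of_le_of_ne hvd hy'.2⟩

lemma no_other_TJ {Q : Set (Set (ℝ × ℝ))} (hG : GoodMesh Q) {T0 R T : Set (ℝ × ℝ)} {v : ℝ × ℝ}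
    (hT0 : T0 ∈ Q) (hc : v ∈ corners T0)
    (hR : R ∈ Q) (hT : T ∈ Q)
    {x1 x2 y1 y2 a b c d : ℝ} (hx : x1 < x2) (hy : y1 < y2) (hab : a < b) (hcd : c < d)
    (hRr : R = rect x1 x2 y1 y2) (hTr : T = rect a b c d)
    (hvR : v ∈ rect x1 x2 y1 y2) (hvT : v ∈ rect a b c d)
    (hncR : v ∉ corners R) (hncT : v ∉ corners T) (hne : T ≠ R) : False := by
  obtain ⟨α, β, γ, δ, hαβ, hγδ, hT0r⟩ := hG.1 T0 hT0
  have hc' := (mem_corners_rect hαβ hγδ).mp (hT0r ▸ hc)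
  have hvT0 : v ∈ rect α β γ δ := by
    rw [mem_rect]
    constructor
    · rcases hc'.1 with h | h <;> rw [h] <;> exact ⟨by linarith, by linarith⟩
    · rcases hc'.2 with h | h <;> rw [h] <;> exact ⟨by linarith, by linarith⟩
  have hTR : ∀ s t : ℝ, VSign a b v.1 s → VSign x1 x2 v.1 s →
      VSign c d v.2 t → VSign y1 y2 v.2 t → False :=
    fun s t h1 h2 h3 h4 =>
      hne (eq_of_signs hG hT hR hab hcd hx hy hTr hRr hvT hvR h1 h2 h3 h4)
  have hT0R : ∀ s t : ℝ, VSign α β v.1 s → VSign x1 x2 v.1 s →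
      VSign γ δ v.2 t → VSign y1 y2 v.2 t → False :=
    fun s t h1 h2 h3 h4 =>
      hncR ((eq_of_signs hG hT0 hR hαβ hγδ hx hy hT0r hRr hvT0 hvR h1 h2 h3 h4) ▸ hc)
  have hT0T : ∀ s t : ℝ, VSign α β v.1 s → VSign a b v.1 s →
      VSign γ δ v.2 t → VSign c d v.2 t → False :=
    fun s t h1 h2 h3 h4 =>
      hncT ((eq_of_signs hG hT0 hT hαβ hγδ hab hcd hT0r hTr hvT0 hvT h1 h2 h3 h4) ▸ hc)
  have kR := key_edge hG hT0 hc hR hx hy hRr hvR hncR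
  have kT := key_edge hG hT0 hc hT hab hcd hTr hvT hncT
  rcases kR with ⟨hR1, hR2, hRy⟩ | ⟨hRx, hR1, hR2⟩ <;>
    rcases kT with ⟨hT1, hT2, hTy⟩ | ⟨hTx, hT1, hT2⟩
  · -- x free for both R and T
    rcases hRy with hRy | hRy <;> rcases hTy with hTy | hTy
    · exact hTR 1 1 (vsign_one hT2) (vsign_one hR2)
        (vsign_one (by linarith)) (vsign_one (by linarith))
    · rcases hc'.1 with hv1 | hv1 <;> rcases hc'.2 with hv2 | hv2
      · exact hT0R 1 1 (vsign_one (by linarith)) (vsign_one hR2)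
          (vsign_one (by linarith)) (vsign_one (by linarith))
      · exact hT0T 1 (-1) (vsign_one (by linarith)) (vsign_one hT2)
          (vsign_neg_one (by linarith)) (vsign_neg_one (by linarith))
      · exact hT0R (-1) 1 (vsign_neg_one (by linarith)) (vsign_neg_one hR1)
          (vsign_one (by linarith)) (vsign_one (by linarith))
      · exact hT0T (-1) (-1) (vsign_neg_one (by linarith)) (vsign_neg_one hT1)
          (vsign_neg_one (by linarith)) (vsign_neg_one (by linarith))
    · rcases hc'.1 with hv1 | hv1 <;> rcases hc'.2 with hv2 | hv2
      · exact hT0T 1 1 (vsign_one (by linarith)) (vsign_one hT2)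
          (vsign_one (by linarith)) (vsign_one (by linarith))
      · exact hT0R 1 (-1) (vsign_one (by linarith)) (vsign_one hR2)
          (vsign_neg_one (by linarith)) (vsign_neg_one (by linarith))
      · exact hT0T (-1) 1 (vsign_neg_one (by linarith)) (vsign_neg_one hT1)
          (vsign_one (by linarith)) (vsign_one (by linarith))
      · exact hT0R (-1) (-1) (vsign_neg_one (by linarith)) (vsign_neg_one hR1)
          (vsign_neg_one (by linarith)) (vsign_neg_one (by linarith))
    · exact hTR 1 (-1) (vsign_one hT2) (vsign_one hR2)
        (vsign_neg_one (by linarith)) (vsign_neg_one (by linarith))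
  · -- x free for R, y free for T
    rcases hRy with hRy | hRy <;> rcases hTx with hTx | hTx
    · exact hTR 1 1 (vsign_one (by linarith)) (vsign_one hR2)
        (vsign_one hT2) (vsign_one (by linarith))
    · exact hTR (-1) 1 (vsign_neg_one (by linarith)) (vsign_neg_one hR1)
        (vsign_one hT2) (vsign_one (by linarith))
    · exact hTR 1 (-1) (vsign_one (by linarith)) (vsign_one hR2)
        (vsign_neg_one hT1) (vsign_neg_one (by linarith))
    · exact hTR (-1) (-1) (vsign_neg_one (by linarith)) (vsign_neg_one hR1)
        (vsign_neg_one hT1) (vsign_neg_one (by linarith))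
  · -- y free for R, x free for T
    rcases hRx with hRx | hRx <;> rcases hTy with hTy | hTy
    · exact hTR 1 1 (vsign_one hT2) (vsign_one (by linarith))
        (vsign_one (by linarith)) (vsign_one hR2)
    · exact hTR 1 (-1) (vsign_one hT2) (vsign_one (by linarith))
        (vsign_neg_one (by linarith)) (vsign_neg_one hR1)
    · exact hTR (-1) 1 (vsign_neg_one hT1) (vsign_neg_one (by linarith))
        (vsign_one (by linarith)) (vsign_one hR2)
    · exact hTR (-1) (-1) (vsign_neg_one hT1) (vsign_neg_one (by linarith))
        (vsign_neg_one (by linarith)) (vsign_neg_one hR1)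
  · -- y free for both
    rcases hRx with hRx | hRx <;> rcases hTx with hTx | hTx
    · exact hTR 1 1 (vsign_one (by linarith)) (vsign_one (by linarith))
        (vsign_one hT2) (vsign_one hR2)
    · rcases hc'.1 with hv1 | hv1 <;> rcases hc'.2 with hv2 | hv2
      · exact hT0R 1 1 (vsign_one (by linarith)) (vsign_one (by linarith))
          (vsign_one (by linarith)) (vsign_one hR2)
      · exact hT0R 1 (-1) (vsign_one (by linarith)) (vsign_one (by linarith))
          (vsign_neg_one (by linarith)) (vsign_neg_one hR1)
      · exact hT0T (-1) 1 (vsign_neg_one (by linarith)) (vsign_neg_one (by linarith))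
          (vsign_one (by linarith)) (vsign_one hT2)
      · exact hT0T (-1) (-1) (vsign_neg_one (by linarith)) (vsign_neg_one (by linarith))
          (vsign_neg_one (by linarith)) (vsign_neg_one hT1)
    · rcases hc'.1 with hv1 | hv1 <;> rcases hc'.2 with hv2 | hv2
      · exact hT0T 1 1 (vsign_one (by linarith)) (vsign_one (by linarith))
          (vsign_one (by linarith)) (vsign_one hT2)
      · exact hT0T 1 (-1) (vsign_one (by linarith)) (vsign_one (by linarith))
          (vsign_neg_one (by linarith)) (vsign_neg_one hT1)
      · exact hT0R (-1) 1 (vsign_neg_one (by linarith)) (vsign_neg_one (by linarith))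
          (vsign_one (by linarith)) (vsign_one hR2)
      · exact hT0R (-1) (-1) (vsign_neg_one (by linarith)) (vsign_neg_one (by linarith))
          (vsign_neg_one (by linarith)) (vsign_neg_one hR1)
    · exact hTR (-1) 1 (vsign_neg_one (by linarith)) (vsign_neg_one (by linarith))
        (vsign_one hT2) (vsign_one hR2)

/-- For any T-junction `v` of an element of a T-mesh there exist a unique direction
`j ∈ {1,2}` and a unique parameter `0 < q < 1` such that `v` is a corner of both
children of the corresponding bisection; consequently `v` is no longer a T-junction
of the refined mesh. -/
theorem stmt11 (M N : ℕ) (hM : 1 ≤ M) (hN : 1 ≤ N) (Q : Set (Set (ℝ × ℝ)))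
    (hQ : MTsp M N Q) (x1 x2 y1 y2 : ℝ) (hx : x1 < x2) (hy : y1 < y2)
    (hmem : rect x1 x2 y1 y2 ∈ Q) (v : ℝ × ℝ) (hv : v ∈ TJ Q (rect x1 x2 y1 y2)) :
    (∃! p : ℕ × ℝ, (p.1 = 1 ∨ p.1 = 2) ∧ 0 < p.2 ∧ p.2 < 1 ∧
      ∀ c ∈ bisect x1 y1 (x2 - x1) (y2 - y1) p.1 p.2, v ∈ corners c) ∧
    (∀ (j : ℕ) (q : ℝ), (j = 1 ∨ j = 2) → 0 < q → q < 1 →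
      (∀ c ∈ bisect x1 y1 (x2 - x1) (y2 - y1) j q, v ∈ corners c) →
      ∀ T ∈ (Q \ {rect x1 x2 y1 y2}) ∪ bisect x1 y1 (x2 - x1) (y2 - y1) j q,
        v ∉ TJ ((Q \ {rect x1 x2 y1 y2}) ∪ bisect x1 y1 (x2 - x1) (y2 - y1) j q) T) := by
  obtain ⟨⟨hmv, hvR⟩, hncR⟩ := hv
  have hG := mtsp_good hQ
  obtain ⟨T0, hT0, hcT0⟩ : ∃ T0 ∈ Q, v ∈ corners T0 := by
    simpa [meshVertices] using hmv
  have kR := key_edge hG hT0 hcT0 hmem hx hy rfl hvR hncR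
  obtain ⟨⟨hva, hvb⟩, hvc, hvd⟩ := mem_rect.mp hvR
  have hxx : x1 + (x2 - x1) = x2 := by ring
  have hyy : y1 + (y2 - y1) = y2 := by ring
  constructor
  · rcases kR with ⟨h1, h2, h3⟩ | ⟨h3, h1, h2⟩
    · -- v is on a horizontal edge of R: j = 1
      set q0 : ℝ := (v.1 - x1) / (x2 - x1) with hq0def
      have hxne : x2 - x1 ≠ 0 := ne_of_gt (by linarith)
      have hkey : x1 + q0 * (x2 - x1) = v.1 := by
        rw [hq0def, div_mul_cancel₀ _ hxne]; ring
      have hbis : bisect x1 y1 (x2 - x1) (y2 - y1) 1 q0 =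
          {rect x1 v.1 y1 y2, rect v.1 x2 y1 y2} := by
        simp only [bisect, if_pos]
        rw [hkey, hyy, hxx]
      refine ⟨(1, q0), ⟨Or.inl rfl, div_pos (by linarith) (by linarith),
        (div_lt_one (by linarith)).mpr (by linarith), ?_⟩, ?_⟩
      · intro c hc
        have hc2 : c ∈ bisect x1 y1 (x2 - x1) (y2 - y1) 1 q0 := hc
        rw [hbis] at hc2
        rcases hc2 with rfl | rfl
        · exact (mem_corners_rect h1 hy).mpr ⟨Or.inr rfl, h3⟩
        · exact (mem_corners_rect h2 hy).mpr ⟨Or.inl rfl, h3⟩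
      · rintro ⟨j, q⟩ ⟨hj, hq0', hq1', hcor⟩
        rcases hj with hj | hj
        · have hj1 : j = 1 := hj
          subst hj1
          have hmem1 : rect x1 (x1 + q * (x2 - x1)) y1 (y1 + (y2 - y1)) ∈
              bisect x1 y1 (x2 - x1) (y2 - y1) (1, q).1 (1, q).2 := by
            simp [bisect]
          have h := hcor _ hmem1
          rw [mem_corners_rect (by nlinarith) (by linarith)] at h
          rcases h.1 with hh | hh
          · exact absurd hh (ne_of_gt h1)
          · have hqq : q = q0 := by
              rw [hq0def, eq_div_iff hxne]; linarith
            rw [hqq]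
        · have hj2 : j = 2 := hj
          subst hj2
          have hmem1 : rect x1 (x1 + (x2 - x1)) y1 (y1 + q * (y2 - y1)) ∈
              bisect x1 y1 (x2 - x1) (y2 - y1) (2, q).1 (2, q).2 := by
            norm_num [bisect]
          have h := hcor _ hmem1
          rw [mem_corners_rect (by linarith) (by nlinarith)] at h
          exfalso
          rcases h.1 with hh | hh
          · linarith
          · rw [hxx] at hh; linarith
    · -- v is on a vertical edge of R: j = 2
      set q0 : ℝ := (v.2 - y1) / (y2 - y1) with hq0def
      have hyne : y2 - y1 ≠ 0 := ne_of_gt (by linarith)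
      have hkey : y1 + q0 * (y2 - y1) = v.2 := by
        rw [hq0def, div_mul_cancel₀ _ hyne]; ring
      have hbis : bisect x1 y1 (x2 - x1) (y2 - y1) 2 q0 =
          {rect x1 x2 y1 v.2, rect x1 x2 v.2 y2} := by
        norm_num [bisect]
        rw [hkey]
      refine ⟨(2, q0), ⟨Or.inr rfl, div_pos (by linarith) (by linarith),
        (div_lt_one (by linarith)).mpr (by linarith), ?_⟩, ?_⟩
      · intro c hc
        have hc2 : c ∈ bisect x1 y1 (x2 - x1) (y2 - y1) 2 q0 := hc
        rw [hbis] at hc2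
        rcases hc2 with rfl | rfl
        · exact (mem_corners_rect hx h1).mpr ⟨h3, Or.inr rfl⟩
        · exact (mem_corners_rect hx h2).mpr ⟨h3, Or.inl rfl⟩
      · rintro ⟨j, q⟩ ⟨hj, hq0', hq1', hcor⟩
        rcases hj with hj | hj
        · have hj1 : j = 1 := hj
          subst hj1
          have hmem1 : rect x1 (x1 + q * (x2 - x1)) y1 (y1 + (y2 - y1)) ∈
              bisect x1 y1 (x2 - x1) (y2 - y1) (1, q).1 (1, q).2 := by
            simp [bisect]
          have h := hcor _ hmem1
          rw [mem_corners_rect (by nlinarith) (by linarith)] at h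
          exfalso
          rcases h.2 with hh | hh
          · linarith
          · rw [hyy] at hh; linarith
        · have hj2 : j = 2 := hj
          subst hj2
          have hmem1 : rect x1 (x1 + (x2 - x1)) y1 (y1 + q * (y2 - y1)) ∈
              bisect x1 y1 (x2 - x1) (y2 - y1) (2, q).1 (2, q).2 := by
            norm_num [bisect]
          have h := hcor _ hmem1
          rw [mem_corners_rect (by linarith) (by nlinarith)] at h
          rcases h.2 with hh | hh
          · exact absurd hh (ne_of_gt h1)
          · have hqq : q = q0 := by
              rw [hq0def, eq_div_iff hyne]; linarith
            rw [hqq]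
  · intro j q hj hq0' hq1' hcor T hT hTJ
    obtain ⟨⟨-, hvT⟩, hnc⟩ := hTJ
    rcases hT with ⟨hTQ, hTne⟩ | hTb
    · obtain ⟨a, b, c, d, hab, hcd, hTr⟩ := hG.1 T hTQ
      have hvT' : v ∈ rect a b c d := hTr ▸ hvT
      exact no_other_TJ hG hT0 hcT0 hmem hTQ hx hy hab hcd rfl hTr hvR hvT' hncR hnc
        (by simpa using hTne)
    · exact hnc (hcor T hTb)
end
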